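/- Let H be an RKHS with kernel K, f ∈ H, data yᵢ = f(xᵢ) + εᵢ with εᵢ i.i.d. N(0,σ_n²), and f̂(x) = K(x,X)(K(X,X)+σ_n²I)⁻¹ Y. Then for every δ ∈ (0,1), with probability at least 1−δ, |f(x) − f̂(x)| ≤ σ(x)‖f‖_H + σ_n ‖K(x,X)(K(X,X)+σ_n²I)⁻¹‖₂ √(2 log(2/δ)). -/

import Mathlib

/-!
The error `f(x) - f̂(x)` splits into the bias `⟪f, k x - ∑ φᵢ k(xᵢ)⟫` minus the noise `∑ φᵢ εᵢ`.
By Cauchy–Schwarz the bias is at most `‖f‖ ‖k x - ∑ φᵢ k(xᵢ)‖`, and the normal equations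
`(K(X,X) + σ_n² I) φ = K(X,x)` give `‖k x - ∑ φᵢ k(xᵢ)‖² + σ_n² ‖φ‖² = σ(x)²`.
The noise is sub-Gaussian with variance proxy `σ_n² ‖φ‖²`, so by the two-sided Chernoff bound it
exceeds `σ_n ‖φ‖ √(2 log (2/δ))` in absolute value with probability at most `δ`.
-/

open Matrix MeasureTheory ProbabilityTheory
open scoped NNReal RealInnerProductSpace

namespace ProbabilityTheory

variable {Θ : Type*} [MeasurableSpace Θ] {μ : Measure Θ}

lemma hasSubgaussianMGF_of_map_eq_gaussianReal {X : Θ → ℝ} {v : ℝ≥0}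
    (h : μ.map X = gaussianReal 0 v) : HasSubgaussianMGF X v μ := by
  have hX : AEMeasurable X μ := aemeasurable_of_map_neZero (by rw [h]; infer_instance)
  refine (HasSubgaussianMGF.id_map_iff hX).1 ⟨fun t => ?_, fun t => ?_⟩
  · rw [h]; exact integrable_exp_mul_gaussianReal t
  · rw [h, mgf_id_gaussianReal]; simp

lemma hasSubgaussianMGF_sum_mul_of_gaussianReal {ι : Type*} [Fintype ι] {ε : ι → Θ → ℝ}
    {v : ℝ≥0} (hind : iIndepFun ε μ) (hgauss : ∀ i, μ.map (ε i) = gaussianReal 0 v)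
    (φ : ι → ℝ) :
    HasSubgaussianMGF (fun θ => ∑ i, φ i * ε i θ) (∑ i, ‖φ i‖₊ ^ 2 * v) μ := by
  convert HasSubgaussianMGF.sum_of_iIndepFun (s := Finset.univ)
    (hind.comp (fun i x => φ i * x) fun i => measurable_const_mul (φ i))
    fun i _ => (hasSubgaussianMGF_of_map_eq_gaussianReal (hgauss i)).const_mul (φ i) using 4
  · rfl
  · congr 1
    ext
    exact sq_abs _

lemma HasSubgaussianMGF.measureReal_abs_ge_le {X : Θ → ℝ} {c : ℝ≥0}
    (h : HasSubgaussianMGF X c μ) {a : ℝ} (ha : 0 ≤ a) :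
    μ.real {θ | a ≤ |X θ|} ≤ 2 * Real.exp (-a ^ 2 / (2 * c)) := by
  have hunion : {θ | a ≤ |X θ|} = {θ | a ≤ X θ} ∪ {θ | a ≤ (-X) θ} := by
    ext θ; simp [le_abs]
  calc μ.real {θ | a ≤ |X θ|} ≤ μ.real {θ | a ≤ X θ} + μ.real {θ | a ≤ (-X) θ} :=
        hunion ▸ measureReal_union_le _ _
    _ ≤ _ := by linarith [h.measure_ge_le ha, h.neg.measure_ge_le ha]

lemma HasSubgaussianMGF.ofReal_one_sub_le_measure_abs_le [IsProbabilityMeasure μ] {X : Θ → ℝ}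
    {c : ℝ≥0} (h : HasSubgaussianMGF X c μ) {δ : ℝ} (hδ₀ : 0 < δ) (hδ₂ : δ ≤ 2) :
    ENNReal.ofReal (1 - δ) ≤ μ {θ | |X θ| ≤ √c * √(2 * Real.log (2 / δ))} := by
  set a := √c * √(2 * Real.log (2 / δ))
  set S := {θ | |X θ| ≤ a}
  suffices hSc : μ Sᶜ ≤ ENNReal.ofReal δ by
    calc ENNReal.ofReal (1 - δ) = 1 - ENNReal.ofReal δ := by
          rw [ENNReal.ofReal_sub _ hδ₀.le, ENNReal.ofReal_one]
      _ ≤ 1 - μ Sᶜ := tsub_le_tsub_left hSc _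
      _ ≤ μ S := by
          rw [tsub_le_iff_right, ← measure_univ (μ := μ)]
          exact measure_univ_le_add_compl S
  rcases eq_zero_or_pos c with rfl | hc
  · refine (measure_mono_null (fun θ hθ => ?_)
      h.ae_eq_zero_of_hasSubgaussianMGF_zero).trans_le zero_le
    simp_all [S, a]
  · have hlog : 0 ≤ 2 * Real.log (2 / δ) := by
      have : 1 ≤ 2 / δ := by rw [le_div_iff₀ hδ₀]; linarith
      linarith [Real.log_nonneg this]
    have hexp : 2 * Real.exp (-a ^ 2 / (2 * c)) = δ := by
      rw [mul_pow, Real.sq_sqrt (NNReal.coe_nonneg c), Real.sq_sqrt hlog,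
        show -(c * (2 * Real.log (2 / δ))) / (2 * c) = -Real.log (2 / δ) by field_simp,
        Real.exp_neg, Real.exp_log (by positivity)]
      field_simp
    have hsub : Sᶜ ⊆ {θ | a ≤ |X θ|} := fun θ hθ => (not_le.1 (Set.notMem_ofPred_iff.1 hθ)).le
    refine (measure_mono hsub).trans ?_
    rw [← hexp, ← ofReal_measureReal]
    exact ENNReal.ofReal_le_ofReal (h.measureReal_abs_ge_le (by positivity))
end ProbabilityTheory

namespace Matrix

variable {ι : Type*} [Fintype ι]

lemma IsSymm.dotProduct_mulVec_comm {R : Type*} [CommSemiring R] {B : Matrix ι ι R}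
    (hB : B.IsSymm) (v w : ι → R) : v ⬝ᵥ (B *ᵥ w) = (B *ᵥ v) ⬝ᵥ w := by
  rw [dotProduct_mulVec, ← vecMul_transpose, hB.eq]

variable {H : Type*} [NormedAddCommGroup H] [InnerProductSpace ℝ H] [DecidableEq ι]

lemma posDef_gram_add_smul_one (u : ι → H) {c : ℝ} (hc : 0 < c) :
    (gram ℝ u + c • 1).PosDef :=
  PosDef.posSemidef_add (posSemidef_gram ℝ u) (PosDef.one.smul hc)

end Matrix

section RegularizedInterpolation

variable {ι : Type*} [Fintype ι] [DecidableEq ι]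
variable {H : Type*} [NormedAddCommGroup H] [InnerProductSpace ℝ H]

lemma norm_sub_sum_smul_sq_add_mul_sum_sq {u : ι → H} {z : H} {c : ℝ} {φ : ι → ℝ}
    (hφ : (gram ℝ u + c • 1) *ᵥ φ = fun i => ⟪u i, z⟫) :
    ‖z - ∑ i, φ i • u i‖ ^ 2 + c * ∑ i, φ i ^ 2 = ⟪z, z⟫ - (fun i => ⟪u i, z⟫) ⬝ᵥ φ := by
  have hgram : ‖∑ i, φ i • u i‖ ^ 2 + c * ∑ i, φ i ^ 2 = (fun i => ⟪u i, z⟫) ⬝ᵥ φ := by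
    rw [← real_inner_self_eq_norm_sq, ← star_trivial φ, ← star_dotProduct_gram_mulVec, star_trivial,
      dotProduct_comm, ← hφ, add_mulVec, add_dotProduct, smul_mulVec, one_mulVec, smul_dotProduct]
    simp [dotProduct, sq]
  have hcross : ⟪z, ∑ i, φ i • u i⟫ = (fun i => ⟪u i, z⟫) ⬝ᵥ φ := by
    simp [inner_sum, real_inner_smul_right, dotProduct, real_inner_comm, mul_comm]
  rw [norm_sub_sq_real, hcross, ← real_inner_self_eq_norm_sq z]
  linarith

lemma abs_inner_sub_dotProduct_le {u : ι → H} {z : H} (f : H) {c : ℝ} (hc : 0 ≤ c) {φ : ι → ℝ}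
    (hφ : (gram ℝ u + c • 1) *ᵥ φ = fun i => ⟪u i, z⟫) :
    |⟪f, z⟫ - φ ⬝ᵥ fun i => ⟪f, u i⟫| ≤ √(⟪z, z⟫ - (fun i => ⟪u i, z⟫) ⬝ᵥ φ) * ‖f‖ := by
  have hfw : φ ⬝ᵥ (fun i => ⟪f, u i⟫) = ⟪f, ∑ i, φ i • u i⟫ := by
    simp [inner_sum, real_inner_smul_right, dotProduct]
  have hres : ‖z - ∑ i, φ i • u i‖ ≤ √(⟪z, z⟫ - (fun i => ⟪u i, z⟫) ⬝ᵥ φ) := by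
    rw [← norm_sub_sum_smul_sq_add_mul_sum_sq hφ]
    exact Real.le_sqrt_of_sq_le (le_add_of_nonneg_right (by positivity))
  rw [hfw, ← inner_sub_right, mul_comm]
  exact (abs_real_inner_le_norm _ _).trans (mul_le_mul_of_nonneg_left hres (norm_nonneg f))

end RegularizedInterpolation

theorem stmt_9_general {Θ : Type*} [MeasurableSpace Θ] (μ : Measure Θ) [IsProbabilityMeasure μ]
    {Ω : Type*} {H : Type*} [NormedAddCommGroup H] [InnerProductSpace ℝ H]
    (k : Ω → H) (f : H) (N : ℕ) (X : Fin N → Ω) (x : Ω)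
    (v : ℝ≥0) (hv : 0 < v) (ε : Fin N → Θ → ℝ)
    (hind : iIndepFun ε μ)
    (hgauss : ∀ i, Measure.map (ε i) μ = gaussianReal 0 v)
    (δ : ℝ) (hδ : δ ∈ Set.Ioo (0 : ℝ) 1) :
    let G : Matrix (Fin N) (Fin N) ℝ := Matrix.of fun i j => ⟪k (X i), k (X j)⟫
    let A : Matrix (Fin N) (Fin N) ℝ := G + (v : ℝ) • (1 : Matrix (Fin N) (Fin N) ℝ)
    let kx : Fin N → ℝ := fun i => ⟪k (X i), k x⟫
    let φ : Fin N → ℝ := A⁻¹ *ᵥ kx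
    let Y : Θ → Fin N → ℝ := fun θ i => ⟪f, k (X i)⟫ + ε i θ
    let fhat : Θ → ℝ := fun θ => kx ⬝ᵥ (A⁻¹ *ᵥ Y θ)
    ENNReal.ofReal (1 - δ) ≤
      μ {θ | |⟪f, k x⟫ - fhat θ| ≤
        Real.sqrt (⟪k x, k x⟫ - kx ⬝ᵥ (A⁻¹ *ᵥ kx)) * ‖f‖ +
          Real.sqrt v * Real.sqrt (∑ i, (φ i) ^ 2) * Real.sqrt (2 * Real.log (2 / δ))} := by
  intro G A kx φ Y fhat
  -- `G` is `gram ℝ (k ∘ X)` by definition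
  have hA : A.PosDef := posDef_gram_add_smul_one (k ∘ X) hv
  have hφ : A *ᵥ φ = kx := by
    rw [mulVec_mulVec, mul_nonsing_inv _ ((isUnit_iff_isUnit_det A).1 hA.isUnit), one_mulVec]
  have hfhat (θ : Θ) : fhat θ = φ ⬝ᵥ (fun i => ⟪f, k (X i)⟫) + ∑ i, φ i * ε i θ := by
    rw [show fhat θ = φ ⬝ᵥ Y θ from
      (isHermitian_iff_isSymm.1 hA.isHermitian.inv).dotProduct_mulVec_comm kx (Y θ)]
    simp [Y, dotProduct, mul_add, Finset.sum_add_distrib]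
  have hbias := abs_inner_sub_dotProduct_le (u := k ∘ X) f hv.le hφ
  have hnoise := (hasSubgaussianMGF_sum_mul_of_gaussianReal hind hgauss φ)
    |>.ofReal_one_sub_le_measure_abs_le hδ.1 (by linarith [hδ.2])
  refine hnoise.trans (measure_mono fun θ hθ => ?_)
  have hc : √(↑(∑ i, ‖φ i‖₊ ^ 2 * v : ℝ≥0) : ℝ) = √v * √(∑ i, φ i ^ 2) := by
    push_cast [Real.norm_eq_abs, sq_abs, ← Finset.sum_mul]
    rw [Real.sqrt_mul (by positivity), mul_comm]
  rw [Set.mem_ofPred_eq, hc] at hθ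
  rw [Set.mem_ofPred_eq, hfhat θ, ← sub_sub]
  exact (abs_sub _ _).trans (add_le_add hbias hθ)

/-- High-probability pointwise error bound for GP regression with noisy data
`yᵢ = f(xᵢ) + εᵢ`, `εᵢ` i.i.d. `N(0, σ_n²)`: for every `δ ∈ (0,1)`, with
probability at least `1 − δ`,
`|f(x) − f̂(x)| ≤ σ(x)‖f‖_H + σ_n ‖K(x,X)(K(X,X)+σ_n²I)⁻¹‖₂ √(2 log(2/δ))`.
The RKHS is modeled by a real inner product space `H` with kernel sections
`k : Ω → H`, evaluation `f(y) = ⟪f, k y⟫`. -/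
theorem stmt_9 {Θ : Type*} [MeasurableSpace Θ] (μ : Measure Θ) [IsProbabilityMeasure μ]
    {Ω : Type*} {H : Type*} [NormedAddCommGroup H] [InnerProductSpace ℝ H]
    (k : Ω → H) (f : H) (N : ℕ) (X : Fin N → Ω) (x : Ω)
    (v : ℝ≥0) (hv : 0 < v) (ε : Fin N → Θ → ℝ)
    (hmeas : ∀ i, Measurable (ε i))
    (hind : iIndepFun ε μ)
    (hgauss : ∀ i, Measure.map (ε i) μ = gaussianReal 0 v)
    (δ : ℝ) (hδ : δ ∈ Set.Ioo (0 : ℝ) 1) :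
    let G : Matrix (Fin N) (Fin N) ℝ := Matrix.of fun i j => ⟪k (X i), k (X j)⟫
    let A : Matrix (Fin N) (Fin N) ℝ := G + (v : ℝ) • (1 : Matrix (Fin N) (Fin N) ℝ)
    let kx : Fin N → ℝ := fun i => ⟪k (X i), k x⟫
    let φ : Fin N → ℝ := A⁻¹ *ᵥ kx
    let Y : Θ → Fin N → ℝ := fun θ i => ⟪f, k (X i)⟫ + ε i θ
    let fhat : Θ → ℝ := fun θ => kx ⬝ᵥ (A⁻¹ *ᵥ Y θ)
    ENNReal.ofReal (1 - δ) ≤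
      μ {θ | |⟪f, k x⟫ - fhat θ| ≤
        Real.sqrt (⟪k x, k x⟫ - kx ⬝ᵥ (A⁻¹ *ᵥ kx)) * ‖f‖ +
          Real.sqrt v * Real.sqrt (∑ i, (φ i) ^ 2) * Real.sqrt (2 * Real.log (2 / δ))} :=
  stmt_9_general μ k f N X x v hv ε hind hgauss δ hδ
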